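/- arXiv:2404.19344 — 3 statements merged into one kernel-verified Lean document; each statement's English description precedes it below -/
import Mathlib

section
/- Let T ≥ 2 be an integer, let 1 ≤ s ≤ r < e ≤ T be integers, let f ∈ ℝ^T have exactly one change-point r on [s,e] with values μ₁, μ₂ and jump magnitude Δ, let X ∈ ℝ^T and set ε = X − f. Let C₃ = 2·(2√2 + 4)². Assume: (i) |ε̃^b_{s,e}| ≤ √(8·log T) for every integer b with s ≤ b < e; (ii) |⟨ψ^b_{s,e}·⟨f,ψ^b_{s,e}⟩ − ψ^r_{s,e}·⟨f,ψ^r_{s,e}⟩, ε⟩| ≤ √(8·log T)·‖ψ^b_{s,e}·⟨f,ψ^b_{s,e}⟩ − ψ^r_{s,e}·⟨f,ψ^r_{s,e}⟩‖₂ for every integer b with s ≤ b < e; and (iii) min{r−s+1, e−r}·Δ² > C₃·log T. Then every integer b* with s ≤ b* < e and |b* − r|·Δ² > C₃·log T satisfies (X̃^r_{s,e})² > (X̃^{b*}_{s,e})²; consequently, every integer b̂ with s ≤ b̂ < e that maximizes |X̃^b_{s,e}| over b ∈ {s,…,e−1} satisfies |b̂ − r|·Δ² ≤ C₃·log T. 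-/
open Real Finset

noncomputable def cusum (x : ℕ → ℝ) (s b e : ℕ) : ℝ :=
  Real.sqrt (((e : ℝ) - b) / (((e : ℝ) - s + 1) * ((b : ℝ) - s + 1))) *
      (∑ t ∈ Finset.Icc s b, x t) -
    Real.sqrt (((b : ℝ) - s + 1) / (((e : ℝ) - s + 1) * ((e : ℝ) - b))) *
      (∑ t ∈ Finset.Icc (b + 1) e, x t)

noncomputable def psi (s b e t : ℕ) : ℝ :=
  if s ≤ t ∧ t ≤ b then
    Real.sqrt (((e : ℝ) - b) / (((e : ℝ) - s + 1) * ((b : ℝ) - s + 1)))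
  else if b + 1 ≤ t ∧ t ≤ e then
    -Real.sqrt (((b : ℝ) - s + 1) / (((e : ℝ) - s + 1) * ((e : ℝ) - b)))
  else 0

noncomputable def innerT (T : ℕ) (x y : ℕ → ℝ) : ℝ := ∑ t ∈ Finset.Icc 1 T, x t * y t

noncomputable def normT (T : ℕ) (x : ℕ → ℝ) : ℝ :=
  Real.sqrt (∑ t ∈ Finset.Icc 1 T, (x t) ^ 2)

lemma mul_sqrt_eq (x y : ℝ) (hx : 0 ≤ x) : x * Real.sqrt y = Real.sqrt (x^2 * y) := by
  rw [Real.sqrt_mul (sq_nonneg x), Real.sqrt_sq hx]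

lemma sum_Icc_split (s b e : ℕ) (hsb : s ≤ b) (hbe : b ≤ e) (x : ℕ → ℝ) :
    ∑ t ∈ Finset.Icc s e, x t = ∑ t ∈ Finset.Icc s b, x t + ∑ t ∈ Finset.Icc (b+1) e, x t := by
  rw [← Finset.sum_union (by
    rw [Finset.disjoint_left]; intro t ht ht'
    simp only [Finset.mem_Icc] at ht ht'; omega)]
  congr 1
  ext t
  simp only [Finset.mem_union, Finset.mem_Icc]
  omega

lemma sum_Icc_const (m n : ℕ) (c : ℝ) (h : m ≤ n + 1) :
    ∑ _t ∈ Finset.Icc m n, c = ((n:ℝ) + 1 - m) * c := by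
  rw [Finset.sum_const, Nat.card_Icc, nsmul_eq_mul, Nat.cast_sub h]
  push_cast
  ring

lemma sum_psi_mul (T s b e : ℕ) (hs : 1 ≤ s) (hsb : s ≤ b) (hbe : b < e) (heT : e ≤ T)
    (g : ℕ → ℝ) :
    ∑ t ∈ Finset.Icc 1 T, psi s b e t * g t
      = Real.sqrt (((e:ℝ)-b)/(((e:ℝ)-s+1)*((b:ℝ)-s+1))) * (∑ t ∈ Finset.Icc s b, g t)
        - Real.sqrt (((b:ℝ)-s+1)/(((e:ℝ)-s+1)*((e:ℝ)-b))) * (∑ t ∈ Finset.Icc (b+1) e, g t) := by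
  have hsub : Finset.Icc s e ⊆ Finset.Icc 1 T := Finset.Icc_subset_Icc hs heT
  have h0 : ∀ t ∈ Finset.Icc 1 T, t ∉ Finset.Icc s e → psi s b e t * g t = 0 := by
    intro t _ hnt
    simp only [Finset.mem_Icc] at hnt
    have hz : psi s b e t = 0 := by
      unfold psi; rw [if_neg (by omega), if_neg (by omega)]
    rw [hz, zero_mul]
  rw [← Finset.sum_subset hsub h0, sum_Icc_split s b e hsb hbe.le]
  have e1 : ∑ t ∈ Finset.Icc s b, psi s b e t * g t
      = ∑ t ∈ Finset.Icc s b, Real.sqrt (((e:ℝ)-b)/(((e:ℝ)-s+1)*((b:ℝ)-s+1))) * g t := by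
    refine Finset.sum_congr rfl fun t ht => ?_
    simp only [Finset.mem_Icc] at ht
    unfold psi; rw [if_pos ht]
  have e2 : ∑ t ∈ Finset.Icc (b+1) e, psi s b e t * g t
      = ∑ t ∈ Finset.Icc (b+1) e, (-Real.sqrt (((b:ℝ)-s+1)/(((e:ℝ)-s+1)*((e:ℝ)-b)))) * g t := by
    refine Finset.sum_congr rfl fun t ht => ?_
    simp only [Finset.mem_Icc] at ht
    unfold psi; rw [if_neg (by omega), if_pos ht]
  rw [e1, e2, ← Finset.mul_sum, ← Finset.mul_sum]
  ring

lemma sum_psi_mul_cusum (T s b e : ℕ) (hs : 1 ≤ s) (hsb : s ≤ b) (hbe : b < e) (heT : e ≤ T)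
    (g : ℕ → ℝ) : ∑ t ∈ Finset.Icc 1 T, psi s b e t * g t = cusum g s b e := by
  rw [sum_psi_mul T s b e hs hsb hbe heT g]; rfl

lemma innerT_psi (T s b e : ℕ) (hs : 1 ≤ s) (hsb : s ≤ b) (hbe : b < e) (heT : e ≤ T)
    (x : ℕ → ℝ) : innerT T x (psi s b e) = cusum x s b e := by
  unfold innerT
  rw [Finset.sum_congr rfl fun t _ => mul_comm (x t) (psi s b e t)]
  exact sum_psi_mul_cusum T s b e hs hsb hbe heT x

lemma cusum_const (s b e : ℕ) (c : ℝ) (hsb : s ≤ b) (hbe : b < e) :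
    cusum (fun _ => c) s b e = 0 := by
  have hb1 : (0:ℝ) < (b:ℝ) - s + 1 := by
    have : (s:ℝ) ≤ b := Nat.cast_le.mpr hsb
    linarith
  have hd : (0:ℝ) < (e:ℝ) - b := by
    have : (b:ℝ) < e := Nat.cast_lt.mpr hbe
    linarith
  have hl : (0:ℝ) < (e:ℝ) - s + 1 := by linarith
  unfold cusum
  rw [sum_Icc_const s b c (by omega), sum_Icc_const (b+1) e c (by omega)]
  have w : ((b:ℝ)-s+1) * Real.sqrt (((e:ℝ)-b)/(((e:ℝ)-s+1)*((b:ℝ)-s+1)))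
      = ((e:ℝ)-b) * Real.sqrt (((b:ℝ)-s+1)/(((e:ℝ)-s+1)*((e:ℝ)-b))) := by
    rw [mul_sqrt_eq _ _ hb1.le, mul_sqrt_eq _ _ hd.le]
    congr 1
    field_simp
  push_cast
  linear_combination c * w

lemma psi_sq_one (T s b e : ℕ) (hs : 1 ≤ s) (hsb : s ≤ b) (hbe : b < e) (heT : e ≤ T) :
    ∑ t ∈ Finset.Icc 1 T, psi s b e t * psi s b e t = 1 := by
  have hb1 : (0:ℝ) < (b:ℝ) - s + 1 := by
    have : (s:ℝ) ≤ b := Nat.cast_le.mpr hsb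
    linarith
  have hd : (0:ℝ) < (e:ℝ) - b := by
    have : (b:ℝ) < e := Nat.cast_lt.mpr hbe
    linarith
  have hl : (0:ℝ) < (e:ℝ) - s + 1 := by linarith
  rw [sum_psi_mul T s b e hs hsb hbe heT]
  have e1 : ∑ t ∈ Finset.Icc s b, psi s b e t
      = ((b:ℝ)+1-s) * Real.sqrt (((e:ℝ)-b)/(((e:ℝ)-s+1)*((b:ℝ)-s+1))) := by
    rw [Finset.sum_congr rfl (fun t ht => by
      simp only [Finset.mem_Icc] at ht
      show psi s b e t = _
      unfold psi; rw [if_pos ht]), sum_Icc_const s b _ (by omega)]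
  have e2 : ∑ t ∈ Finset.Icc (b+1) e, psi s b e t
      = ((e:ℝ)-b) * (-Real.sqrt (((b:ℝ)-s+1)/(((e:ℝ)-s+1)*((e:ℝ)-b)))) := by
    rw [Finset.sum_congr rfl (fun t ht => by
      simp only [Finset.mem_Icc] at ht
      show psi s b e t = _
      unfold psi; rw [if_neg (by omega), if_pos ht]), sum_Icc_const (b+1) e _ (by omega)]
    push_cast; ring
  rw [e1, e2]
  have s1 := Real.mul_self_sqrt (show (0:ℝ) ≤ ((e:ℝ)-b)/(((e:ℝ)-s+1)*((b:ℝ)-s+1)) from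
    div_nonneg hd.le (by positivity))
  have s2 := Real.mul_self_sqrt (show (0:ℝ) ≤ ((b:ℝ)-s+1)/(((e:ℝ)-s+1)*((e:ℝ)-b)) from
    div_nonneg hb1.le (by positivity))
  have keyid : ((b:ℝ)-s+1) * (((e:ℝ)-b)/(((e:ℝ)-s+1)*((b:ℝ)-s+1)))
      + ((e:ℝ)-b) * (((b:ℝ)-s+1)/(((e:ℝ)-s+1)*((e:ℝ)-b))) = 1 := by
    field_simp
    ring
  linear_combination ((b:ℝ)+1-s) * s1 + ((e:ℝ)-b) * s2 + keyid

lemma cusum_split (X f ε : ℕ → ℝ) (h : ∀ t, X t = f t + ε t) (s b e : ℕ) :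
    cusum X s b e = cusum f s b e + cusum ε s b e := by
  unfold cusum
  rw [Finset.sum_congr rfl (fun t _ => h t), Finset.sum_congr rfl (fun t _ => h t),
    Finset.sum_add_distrib, Finset.sum_add_distrib]
  ring

set_option maxHeartbeats 1000000 in
/-- localization of the CUSUM maximizer near the true change-point. -/
theorem statement7 (T s r e : ℕ) (hT : 2 ≤ T) (hs : 1 ≤ s) (hsr : s ≤ r) (hre : r < e)
    (heT : e ≤ T) (f X : ℕ → ℝ) (μ₁ μ₂ Δ : ℝ) (hμ : μ₁ ≠ μ₂)
    (hf₁ : ∀ t, s ≤ t → t ≤ r → f t = μ₁) (hf₂ : ∀ t, r + 1 ≤ t → t ≤ e → f t = μ₂)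
    (hΔ : Δ = |μ₂ - μ₁|) (ε : ℕ → ℝ) (hε : ε = fun t => X t - f t)
    (C₃ : ℝ) (hC₃ : C₃ = 2 * (2 * Real.sqrt 2 + 4) ^ 2)
    (h1 : ∀ b, s ≤ b → b < e → |cusum ε s b e| ≤ Real.sqrt (8 * Real.log T))
    (h2 : ∀ b, s ≤ b → b < e →
      |innerT T (fun t =>
          psi s b e t * innerT T f (psi s b e) - psi s r e t * innerT T f (psi s r e)) ε| ≤
        Real.sqrt (8 * Real.log T) *
          normT T (fun t =>
            psi s b e t * innerT T f (psi s b e) - psi s r e t * innerT T f (psi s r e)))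
    (h3 : C₃ * Real.log T < min ((r : ℝ) - s + 1) ((e : ℝ) - r) * Δ ^ 2) :
    (∀ bstar, s ≤ bstar → bstar < e →
        C₃ * Real.log T < |(bstar : ℝ) - r| * Δ ^ 2 →
        (cusum X s bstar e) ^ 2 < (cusum X s r e) ^ 2) ∧
    (∀ bhat, s ≤ bhat → bhat < e →
        (∀ b, s ≤ b → b < e → |cusum X s b e| ≤ |cusum X s bhat e|) →
        |(bhat : ℝ) - r| * Δ ^ 2 ≤ C₃ * Real.log T) := by
  have hlogT : 0 < Real.log T := Real.log_pos (by exact_mod_cast (by omega : (1:ℕ) < T))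
  have hlam0 : (0:ℝ) ≤ Real.sqrt (8 * Real.log T) := Real.sqrt_nonneg _
  have hlamsq : Real.sqrt (8 * Real.log T) ^ 2 = 8 * Real.log T :=
    Real.sq_sqrt (by positivity)
  have hC3pos : 0 < C₃ := by rw [hC₃]; positivity
  have hK0 : 0 < C₃ * Real.log T := mul_pos hC3pos hlogT
  have hA : (0:ℝ) < (r:ℝ) - s + 1 := by
    have : (s:ℝ) ≤ r := Nat.cast_le.mpr hsr
    linarith
  have hCc : (0:ℝ) < (e:ℝ) - r := by
    have : (r:ℝ) < e := Nat.cast_lt.mpr hre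
    linarith
  have hL : (0:ℝ) < (e:ℝ) - s + 1 := by linarith
  have hXfe : ∀ t, X t = f t + ε t := by intro t; simp [hε]
  -- value of the CUSUM of f at r
  have hFr : cusum f s r e
      = Real.sqrt ((((r:ℝ)-s+1) * ((e:ℝ)-r)) / ((e:ℝ)-s+1)) * (μ₁ - μ₂) := by
    have e1 : ∑ t ∈ Finset.Icc s r, f t = ((r:ℝ)-s+1)*μ₁ := by
      rw [Finset.sum_congr rfl (fun t ht => by
            simp only [Finset.mem_Icc] at ht; exact hf₁ t ht.1 ht.2),
          sum_Icc_const s r μ₁ (by omega)]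
      ring
    have e2 : ∑ t ∈ Finset.Icc (r+1) e, f t = ((e:ℝ)-r)*μ₂ := by
      rw [Finset.sum_congr rfl (fun t ht => by
            simp only [Finset.mem_Icc] at ht; exact hf₂ t ht.1 ht.2),
          sum_Icc_const (r+1) e μ₂ (by omega)]
      push_cast; ring
    unfold cusum
    rw [e1, e2]
    have w1 : ((r:ℝ)-s+1) * Real.sqrt (((e:ℝ)-r)/(((e:ℝ)-s+1)*((r:ℝ)-s+1)))
        = Real.sqrt ((((r:ℝ)-s+1)*((e:ℝ)-r))/((e:ℝ)-s+1)) := by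
      rw [mul_sqrt_eq _ _ hA.le]
      congr 1
      field_simp
    have w2 : ((e:ℝ)-r) * Real.sqrt (((r:ℝ)-s+1)/(((e:ℝ)-s+1)*((e:ℝ)-r)))
        = Real.sqrt ((((r:ℝ)-s+1)*((e:ℝ)-r))/((e:ℝ)-s+1)) := by
      rw [mul_sqrt_eq _ _ hCc.le]
      congr 1
      field_simp
    linear_combination μ₁ * w1 - μ₂ * w2
  have hFrne : cusum f s r e ≠ 0 := by
    rw [hFr]
    exact mul_ne_zero (Real.sqrt_ne_zero'.mpr (by positivity)) (sub_ne_zero.mpr hμ)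
  have hFr2 : (cusum f s r e)^2 = ((((r:ℝ)-s+1) * ((e:ℝ)-r)) / ((e:ℝ)-s+1)) * (μ₁-μ₂)^2 := by
    rw [hFr, mul_pow, Real.sq_sqrt (by positivity)]
  -- pointwise decomposition of f on [s,e]
  have hpt : ∀ t, s ≤ t → t ≤ e →
      f t = (((r:ℝ)-s+1)*μ₁ + ((e:ℝ)-r)*μ₂)/((e:ℝ)-s+1) + cusum f s r e * psi s r e t := by
    intro t h1t h2t
    rw [hFr]
    by_cases htr : t ≤ r
    · rw [hf₁ t h1t htr]
      unfold psi
      rw [if_pos ⟨h1t, htr⟩]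
      have w : Real.sqrt ((((r:ℝ)-s+1)*((e:ℝ)-r))/((e:ℝ)-s+1))
          * Real.sqrt (((e:ℝ)-r)/(((e:ℝ)-s+1)*((r:ℝ)-s+1))) = ((e:ℝ)-r)/((e:ℝ)-s+1) := by
        rw [← Real.sqrt_mul (by positivity),
          show (((r:ℝ)-s+1)*((e:ℝ)-r))/((e:ℝ)-s+1) * (((e:ℝ)-r)/(((e:ℝ)-s+1)*((r:ℝ)-s+1)))
            = (((e:ℝ)-r)/((e:ℝ)-s+1))^2 from by field_simp]
        exact Real.sqrt_sq (by positivity)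
      have base : μ₁ = (((r:ℝ)-s+1)*μ₁ + ((e:ℝ)-r)*μ₂)/((e:ℝ)-s+1)
          + (μ₁-μ₂)*(((e:ℝ)-r)/((e:ℝ)-s+1)) := by
        field_simp
        ring
      linear_combination base - (μ₁ - μ₂) * w
    · have h1t' : r + 1 ≤ t := by omega
      rw [hf₂ t h1t' h2t]
      unfold psi
      rw [if_neg (by omega), if_pos ⟨h1t', h2t⟩]
      have w : Real.sqrt ((((r:ℝ)-s+1)*((e:ℝ)-r))/((e:ℝ)-s+1))
          * Real.sqrt (((r:ℝ)-s+1)/(((e:ℝ)-s+1)*((e:ℝ)-r))) = ((r:ℝ)-s+1)/((e:ℝ)-s+1) := by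
        rw [← Real.sqrt_mul (by positivity),
          show (((r:ℝ)-s+1)*((e:ℝ)-r))/((e:ℝ)-s+1) * (((r:ℝ)-s+1)/(((e:ℝ)-s+1)*((e:ℝ)-r)))
            = (((r:ℝ)-s+1)/((e:ℝ)-s+1))^2 from by field_simp]
        exact Real.sqrt_sq (by positivity)
      have base : μ₂ = (((r:ℝ)-s+1)*μ₁ + ((e:ℝ)-r)*μ₂)/((e:ℝ)-s+1)
          - (μ₁-μ₂)*(((r:ℝ)-s+1)/((e:ℝ)-s+1)) := by
        field_simp
        ring
      linear_combination base + (μ₁ - μ₂) * w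
  have hψr : ∀ t, s ≤ t → t ≤ e →
      psi s r e t = (f t - (((r:ℝ)-s+1)*μ₁ + ((e:ℝ)-r)*μ₂)/((e:ℝ)-s+1)) / cusum f s r e := by
    intro t h1t h2t
    rw [eq_div_iff hFrne, hpt t h1t h2t]
    ring
  -- the main estimate
  have key : ∀ b, s ≤ b → b < e → C₃ * Real.log T < |(b:ℝ) - r| * Δ^2 →
      (cusum X s b e)^2 < (cusum X s r e)^2 := by
    intro b hsb hbe hfar
    have hN1 : (0:ℝ) < (b:ℝ) - s + 1 := by
      have : (s:ℝ) ≤ b := Nat.cast_le.mpr hsb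
      linarith
    have hDd : (0:ℝ) < (e:ℝ) - b := by
      have : (b:ℝ) < e := Nat.cast_lt.mpr hbe
      linarith
    -- inner products with psi
    have hθ : ∑ t ∈ Finset.Icc 1 T, psi s b e t * psi s r e t
        = cusum f s b e / cusum f s r e := by
      have hpsib0 : ∑ t ∈ Finset.Icc 1 T, psi s b e t = 0 := by
        have h := sum_psi_mul_cusum T s b e hs hsb hbe heT (fun _ => (1:ℝ))
        simp only [mul_one] at h
        rw [h, cusum_const s b e 1 hsb hbe]
      have step : ∀ t ∈ Finset.Icc 1 T, psi s b e t * psi s r e t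
          = (1 / cusum f s r e) * (psi s b e t * f t)
            - ((((r:ℝ)-s+1)*μ₁ + ((e:ℝ)-r)*μ₂)/((e:ℝ)-s+1) / cusum f s r e) * psi s b e t := by
        intro t _
        by_cases hte : s ≤ t ∧ t ≤ e
        · rw [hψr t hte.1 hte.2]; ring
        · have hz : psi s b e t = 0 := by
            unfold psi; rw [if_neg (by omega), if_neg (by omega)]
          rw [hz]; ring
      rw [Finset.sum_congr rfl step, Finset.sum_sub_distrib, ← Finset.mul_sum, ← Finset.mul_sum,
          sum_psi_mul_cusum T s b e hs hsb hbe heT f, hpsib0]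
      ring
    have hpsibb := psi_sq_one T s b e hs hsb hbe heT
    have hpsirr := psi_sq_one T s r e hs hsr hre heT
    -- norm of the difference vector
    have hnormsq : ∑ t ∈ Finset.Icc 1 T,
        (psi s b e t * cusum f s b e - psi s r e t * cusum f s r e)^2
        = (cusum f s r e)^2 - (cusum f s b e)^2 := by
      have expand : ∀ t ∈ Finset.Icc 1 T,
          (psi s b e t * cusum f s b e - psi s r e t * cusum f s r e)^2
          = (cusum f s b e)^2 * (psi s b e t * psi s b e t)
            - (2 * cusum f s b e * cusum f s r e) * (psi s b e t * psi s r e t)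
            + (cusum f s r e)^2 * (psi s r e t * psi s r e t) := fun t _ => by ring
      rw [Finset.sum_congr rfl expand, Finset.sum_add_distrib, Finset.sum_sub_distrib,
          ← Finset.mul_sum, ← Finset.mul_sum, ← Finset.mul_sum, hpsibb, hpsirr, hθ]
      field_simp
      ring
    have hinnerD : innerT T
        (fun t => psi s b e t * cusum f s b e - psi s r e t * cusum f s r e) ε
        = cusum f s b e * cusum ε s b e - cusum f s r e * cusum ε s r e := by
      simp only [innerT]
      have expand : ∀ t ∈ Finset.Icc 1 T,
          (psi s b e t * cusum f s b e - psi s r e t * cusum f s r e) * ε t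
          = cusum f s b e * (psi s b e t * ε t) - cusum f s r e * (psi s r e t * ε t) :=
        fun t _ => by ring
      rw [Finset.sum_congr rfl expand, Finset.sum_sub_distrib, ← Finset.mul_sum, ← Finset.mul_sum,
          sum_psi_mul_cusum T s b e hs hsb hbe heT ε, sum_psi_mul_cusum T s r e hs hsr hre heT ε]
    have hnormval : normT T
        (fun t => psi s b e t * cusum f s b e - psi s r e t * cusum f s r e)
        = Real.sqrt ((cusum f s r e)^2 - (cusum f s b e)^2) := by
      simp only [normT]
      rw [hnormsq]
    have h2b := h2 b hsb hbe
    simp only [innerT_psi T s b e hs hsb hbe heT f, innerT_psi T s r e hs hsr hre heT f] at h2b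
    rw [hinnerD, hnormval] at h2b
    have hEb := h1 b hsb hbe
    have hEr := h1 r hsr hre
    -- lower bound on the gap
    have hΔsq : Δ^2 = (μ₁ - μ₂)^2 := by rw [hΔ, sq_abs]; ring
    have h3b : C₃ * Real.log T < ((e:ℝ)-r) * Δ^2 :=
      lt_of_lt_of_le h3 (mul_le_mul_of_nonneg_right (min_le_right _ _) (sq_nonneg Δ))
    have h3a : C₃ * Real.log T < ((r:ℝ)-s+1) * Δ^2 :=
      lt_of_lt_of_le h3 (mul_le_mul_of_nonneg_right (min_le_left _ _) (sq_nonneg Δ))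
    have hGlow : C₃ * Real.log T / 2 < (cusum f s r e)^2 - (cusum f s b e)^2 := by
      rcases lt_trichotomy b r with hblt | hbeq | hbgt
      · -- b < r
        have hUc : (0:ℝ) < (r:ℝ) - b := by
          have : (b:ℝ) < r := Nat.cast_lt.mpr hblt
          linarith
        have hfar' : C₃ * Real.log T < ((r:ℝ)-b) * Δ^2 := by
          rwa [abs_of_nonpos (by linarith), neg_sub] at hfar
        have e1 : ∑ t ∈ Finset.Icc s b, f t = ((b:ℝ)-s+1)*μ₁ := by
          rw [Finset.sum_congr rfl (fun t ht => by
                simp only [Finset.mem_Icc] at ht; exact hf₁ t ht.1 (by omega)),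
              sum_Icc_const s b μ₁ (by omega)]
          ring
        have e2 : ∑ t ∈ Finset.Icc (b+1) e, f t = ((r:ℝ)-b)*μ₁ + ((e:ℝ)-r)*μ₂ := by
          rw [sum_Icc_split (b+1) r e (by omega) (by omega)]
          have e2a : ∑ t ∈ Finset.Icc (b+1) r, f t = ((r:ℝ)-b)*μ₁ := by
            rw [Finset.sum_congr rfl (fun t ht => by
                  simp only [Finset.mem_Icc] at ht; exact hf₁ t (by omega) ht.2),
                sum_Icc_const (b+1) r μ₁ (by omega)]
            push_cast; ring
          have e2b : ∑ t ∈ Finset.Icc (r+1) e, f t = ((e:ℝ)-r)*μ₂ := by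
            rw [Finset.sum_congr rfl (fun t ht => by
                  simp only [Finset.mem_Icc] at ht; exact hf₂ t ht.1 ht.2),
                sum_Icc_const (r+1) e μ₂ (by omega)]
            push_cast; ring
          rw [e2a, e2b]
        have hFbeq : cusum f s b e
            = Real.sqrt (((e:ℝ)-b)/(((e:ℝ)-s+1)*((b:ℝ)-s+1))) * (((b:ℝ)-s+1)*μ₁)
              - Real.sqrt (((b:ℝ)-s+1)/(((e:ℝ)-s+1)*((e:ℝ)-b)))
                * (((r:ℝ)-b)*μ₁ + ((e:ℝ)-r)*μ₂) := by
          unfold cusum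
          rw [e1, e2]
        have s1 := Real.mul_self_sqrt (show (0:ℝ) ≤ ((e:ℝ)-b)/(((e:ℝ)-s+1)*((b:ℝ)-s+1)) from
          div_nonneg hDd.le (by positivity))
        have s2 := Real.mul_self_sqrt (show (0:ℝ) ≤ ((b:ℝ)-s+1)/(((e:ℝ)-s+1)*((e:ℝ)-b)) from
          div_nonneg hN1.le (by positivity))
        have s3 : Real.sqrt (((e:ℝ)-b)/(((e:ℝ)-s+1)*((b:ℝ)-s+1)))
            * Real.sqrt (((b:ℝ)-s+1)/(((e:ℝ)-s+1)*((e:ℝ)-b))) = 1/((e:ℝ)-s+1) := by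
          rw [← Real.sqrt_mul (div_nonneg hDd.le (by positivity)),
            show (((e:ℝ)-b)/(((e:ℝ)-s+1)*((b:ℝ)-s+1))) * (((b:ℝ)-s+1)/(((e:ℝ)-s+1)*((e:ℝ)-b)))
              = (1/((e:ℝ)-s+1))^2 from by field_simp]
          exact Real.sqrt_sq (by positivity)
        have fieldid : ((((r:ℝ)-s+1)*((e:ℝ)-r))/((e:ℝ)-s+1))*(μ₁-μ₂)^2
            - (((e:ℝ)-b)/(((e:ℝ)-s+1)*((b:ℝ)-s+1))) * (((b:ℝ)-s+1)*μ₁)^2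
            + (2/((e:ℝ)-s+1)) * (((b:ℝ)-s+1)*μ₁) * (((r:ℝ)-b)*μ₁ + ((e:ℝ)-r)*μ₂)
            - (((b:ℝ)-s+1)/(((e:ℝ)-s+1)*((e:ℝ)-b))) * (((r:ℝ)-b)*μ₁ + ((e:ℝ)-r)*μ₂)^2
            = (μ₁-μ₂)^2 * (((e:ℝ)-r)*((r:ℝ)-b)/((e:ℝ)-b)) := by
          field_simp
          ring
        have hGeq : (cusum f s r e)^2 - (cusum f s b e)^2
            = (μ₁-μ₂)^2 * (((e:ℝ)-r)*((r:ℝ)-b)/((e:ℝ)-b)) := by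
          rw [hFr2, hFbeq]
          linear_combination fieldid - ((((b:ℝ)-s+1)*μ₁)^2) * s1
            - ((((r:ℝ)-b)*μ₁ + ((e:ℝ)-r)*μ₂)^2) * s2
            + (2*(((b:ℝ)-s+1)*μ₁)*(((r:ℝ)-b)*μ₁+((e:ℝ)-r)*μ₂)) * s3
        rw [hGeq]
        rw [hΔsq] at h3b hfar'
        rw [show (μ₁-μ₂)^2 * (((e:ℝ)-r)*((r:ℝ)-b)/((e:ℝ)-b))
            = (μ₁-μ₂)^2 * ((e:ℝ)-r)*((r:ℝ)-b)/((e:ℝ)-b) from by ring, lt_div_iff₀ hDd]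
        linarith [mul_lt_mul_of_pos_right h3b hUc, mul_lt_mul_of_pos_right hfar' hCc]
      · exfalso
        subst hbeq
        rw [sub_self, abs_zero, zero_mul] at hfar
        linarith
      · -- r < b
        have hVc : (0:ℝ) < (b:ℝ) - r := by
          have : (r:ℝ) < b := Nat.cast_lt.mpr hbgt
          linarith
        have hfar' : C₃ * Real.log T < ((b:ℝ)-r) * Δ^2 := by
          rwa [abs_of_nonneg (by linarith)] at hfar
        have e1 : ∑ t ∈ Finset.Icc s b, f t = ((r:ℝ)-s+1)*μ₁ + ((b:ℝ)-r)*μ₂ := by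
          rw [sum_Icc_split s r b hsr (by omega)]
          have e1a : ∑ t ∈ Finset.Icc s r, f t = ((r:ℝ)-s+1)*μ₁ := by
            rw [Finset.sum_congr rfl (fun t ht => by
                  simp only [Finset.mem_Icc] at ht; exact hf₁ t ht.1 ht.2),
                sum_Icc_const s r μ₁ (by omega)]
            ring
          have e1b : ∑ t ∈ Finset.Icc (r+1) b, f t = ((b:ℝ)-r)*μ₂ := by
            rw [Finset.sum_congr rfl (fun t ht => by
                  simp only [Finset.mem_Icc] at ht; exact hf₂ t ht.1 (by omega)),
                sum_Icc_const (r+1) b μ₂ (by omega)]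
            push_cast; ring
          rw [e1a, e1b]
        have e2 : ∑ t ∈ Finset.Icc (b+1) e, f t = ((e:ℝ)-b)*μ₂ := by
          rw [Finset.sum_congr rfl (fun t ht => by
                simp only [Finset.mem_Icc] at ht; exact hf₂ t (by omega) ht.2),
              sum_Icc_const (b+1) e μ₂ (by omega)]
          push_cast; ring
        have hFbeq : cusum f s b e
            = Real.sqrt (((e:ℝ)-b)/(((e:ℝ)-s+1)*((b:ℝ)-s+1)))
                * (((r:ℝ)-s+1)*μ₁ + ((b:ℝ)-r)*μ₂)
              - Real.sqrt (((b:ℝ)-s+1)/(((e:ℝ)-s+1)*((e:ℝ)-b))) * (((e:ℝ)-b)*μ₂) := by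
          unfold cusum
          rw [e1, e2]
        have s1 := Real.mul_self_sqrt (show (0:ℝ) ≤ ((e:ℝ)-b)/(((e:ℝ)-s+1)*((b:ℝ)-s+1)) from
          div_nonneg hDd.le (by positivity))
        have s2 := Real.mul_self_sqrt (show (0:ℝ) ≤ ((b:ℝ)-s+1)/(((e:ℝ)-s+1)*((e:ℝ)-b)) from
          div_nonneg hN1.le (by positivity))
        have s3 : Real.sqrt (((e:ℝ)-b)/(((e:ℝ)-s+1)*((b:ℝ)-s+1)))
            * Real.sqrt (((b:ℝ)-s+1)/(((e:ℝ)-s+1)*((e:ℝ)-b))) = 1/((e:ℝ)-s+1) := by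
          rw [← Real.sqrt_mul (div_nonneg hDd.le (by positivity)),
            show (((e:ℝ)-b)/(((e:ℝ)-s+1)*((b:ℝ)-s+1))) * (((b:ℝ)-s+1)/(((e:ℝ)-s+1)*((e:ℝ)-b)))
              = (1/((e:ℝ)-s+1))^2 from by field_simp]
          exact Real.sqrt_sq (by positivity)
        have fieldid : ((((r:ℝ)-s+1)*((e:ℝ)-r))/((e:ℝ)-s+1))*(μ₁-μ₂)^2
            - (((e:ℝ)-b)/(((e:ℝ)-s+1)*((b:ℝ)-s+1))) * (((r:ℝ)-s+1)*μ₁ + ((b:ℝ)-r)*μ₂)^2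
            + (2/((e:ℝ)-s+1)) * (((r:ℝ)-s+1)*μ₁ + ((b:ℝ)-r)*μ₂) * (((e:ℝ)-b)*μ₂)
            - (((b:ℝ)-s+1)/(((e:ℝ)-s+1)*((e:ℝ)-b))) * (((e:ℝ)-b)*μ₂)^2
            = (μ₁-μ₂)^2 * (((r:ℝ)-s+1)*((b:ℝ)-r)/((b:ℝ)-s+1)) := by
          field_simp
          ring
        have hGeq : (cusum f s r e)^2 - (cusum f s b e)^2
            = (μ₁-μ₂)^2 * (((r:ℝ)-s+1)*((b:ℝ)-r)/((b:ℝ)-s+1)) := by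
          rw [hFr2, hFbeq]
          linear_combination fieldid - ((((r:ℝ)-s+1)*μ₁ + ((b:ℝ)-r)*μ₂)^2) * s1
            - ((((e:ℝ)-b)*μ₂)^2) * s2
            + (2*(((r:ℝ)-s+1)*μ₁ + ((b:ℝ)-r)*μ₂)*(((e:ℝ)-b)*μ₂)) * s3
        rw [hGeq]
        rw [hΔsq] at h3a hfar'
        rw [show (μ₁-μ₂)^2 * (((r:ℝ)-s+1)*((b:ℝ)-r)/((b:ℝ)-s+1))
            = (μ₁-μ₂)^2 * ((r:ℝ)-s+1)*((b:ℝ)-r)/((b:ℝ)-s+1) from by ring, lt_div_iff₀ hN1]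
        linarith [mul_lt_mul_of_pos_right h3a hVc, mul_lt_mul_of_pos_right hfar' hA]
    -- assemble the final inequality
    have hGpos : (0:ℝ) < (cusum f s r e)^2 - (cusum f s b e)^2 :=
      lt_trans (half_pos hK0) hGlow
    set P := Real.sqrt ((cusum f s r e)^2 - (cusum f s b e)^2) with hPdef
    have hP0 : 0 ≤ P := Real.sqrt_nonneg _
    have hP2 : P^2 = (cusum f s r e)^2 - (cusum f s b e)^2 := Real.sq_sqrt hGpos.le
    have hs2 : Real.sqrt 2 ^ 2 = 2 := Real.sq_sqrt (by norm_num)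
    have hs2nn : (0:ℝ) ≤ Real.sqrt 2 := Real.sqrt_nonneg 2
    have hkey : (1 + Real.sqrt 2)^2 * Real.sqrt (8 * Real.log T) ^ 2
        = C₃ * Real.log T / 2 := by
      rw [hC₃, hlamsq]
      linear_combination (4 * Real.log T) * hs2
    have hSgt : (1 + Real.sqrt 2) * Real.sqrt (8 * Real.log T) < P := by
      have hsq : ((1 + Real.sqrt 2) * Real.sqrt (8 * Real.log T))^2 < P^2 := by
        rw [hP2, mul_pow, hkey]
        exact hGlow
      exact lt_of_pow_lt_pow_left₀ 2 hP0 hsq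
    have hlamsqrt2 : 0 ≤ Real.sqrt 2 * Real.sqrt (8 * Real.log T) :=
      mul_nonneg hs2nn hlam0
    have h1' : Real.sqrt 2 * Real.sqrt (8 * Real.log T) < P - Real.sqrt (8 * Real.log T) := by
      linarith [hSgt]
    have h3' : (Real.sqrt 2 * Real.sqrt (8 * Real.log T))^2
        < (P - Real.sqrt (8 * Real.log T))^2 :=
      pow_lt_pow_left₀ h1' hlamsqrt2 two_ne_zero
    have hexp : (Real.sqrt 2 * Real.sqrt (8 * Real.log T))^2
        = 2 * Real.sqrt (8 * Real.log T)^2 := by rw [mul_pow, hs2]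
    have hquad : 2 * Real.sqrt (8 * Real.log T)^2 < (P - Real.sqrt (8 * Real.log T))^2 := by
      linarith [h3', hexp]
    obtain ⟨hc1, hc2⟩ := abs_le.mp h2b
    obtain ⟨hb1', hb2'⟩ := abs_le.mp hEb
    obtain ⟨hr1', hr2'⟩ := abs_le.mp hEr
    have hEbsq : (cusum ε s b e)^2 ≤ Real.sqrt (8 * Real.log T)^2 := by
      rw [← sq_abs (cusum ε s b e)]
      exact pow_le_pow_left₀ (abs_nonneg _) hEb 2
    rw [cusum_split X f ε hXfe s b e, cusum_split X f ε hXfe s r e]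
    linarith [hquad, hP2, hc1, hEbsq, sq_nonneg (cusum ε s r e)]
  refine ⟨key, ?_⟩
  intro bhat hb1 hb2 hmax
  by_contra hcon
  push_neg at hcon
  have hlt := key bhat hb1 hb2 hcon
  have hm := hmax r hsr hre
  have hsq : (cusum X s r e)^2 ≤ (cusum X s bhat e)^2 := by
    rw [← sq_abs (cusum X s r e), ← sq_abs (cusum X s bhat e)]
    exact pow_le_pow_left₀ (abs_nonneg _) hm 2
  linarith
end

section
/- Let T ≥ 2 be an integer, let 1 ≤ s ≤ r < e ≤ T be integers, and let f ∈ ℝ^T have exactly one change-point r on [s,e] with values μ₁, μ₂ and jump magnitude Δ. Let C₃ = 2·(2√2 + 4)², and suppose min{r−s+1, e−r}·Δ² ≤ C₃·log T. If X ∈ ℝ^T satisfies |X̃^b_{s,e} − f̃^b_{s,e}| ≤ √(8·log T) for every integer b with s ≤ b < e, then max over integers b with s ≤ b < e of |X̃^b_{s,e}| ≤ (√C₃ + 2√2)·√(log T). -/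
open Real Finset

lemma const_sum_Icc (f : ℕ → ℝ) (μ : ℝ) (p q : ℕ)
    (h : ∀ t, p ≤ t → t ≤ q → f t = μ) :
    ∑ t ∈ Finset.Icc p q, f t = ((q + 1 - p : ℕ) : ℝ) * μ := by
  rw [Finset.sum_congr rfl fun t ht => h t (Finset.mem_Icc.mp ht).1 (Finset.mem_Icc.mp ht).2,
    Finset.sum_const, Nat.card_Icc, nsmul_eq_mul]

lemma const_sum_Ioc (f : ℕ → ℝ) (μ : ℝ) (p q : ℕ)
    (h : ∀ t, p < t → t ≤ q → f t = μ) :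
    ∑ t ∈ Finset.Ioc p q, f t = ((q - p : ℕ) : ℝ) * μ := by
  rw [Finset.sum_congr rfl fun t ht => h t (Finset.mem_Ioc.mp ht).1 (Finset.mem_Ioc.mp ht).2,
    Finset.sum_const, Nat.card_Ioc, nsmul_eq_mul]

lemma sqrt_swap (a c L : ℝ) (ha : 0 < a) (hc : 0 < c) (hL : 0 < L) :
    Real.sqrt (c / (L * a)) * a = Real.sqrt (a / (L * c)) * c := by
  have h1 : Real.sqrt (c / (L * a)) * a = Real.sqrt (c / (L * a) * a ^ 2) := by
    rw [Real.sqrt_mul (by positivity), Real.sqrt_sq ha.le]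
  have h2 : Real.sqrt (a / (L * c)) * c = Real.sqrt (a / (L * c) * c ^ 2) := by
    rw [Real.sqrt_mul (by positivity), Real.sqrt_sq hc.le]
  rw [h1, h2]
  congr 1
  field_simp

lemma sq_bound (a c g m : ℝ) (ha : 0 < a) (hc : 0 < c) (hg : 0 ≤ g) (hgc : g ≤ c)
    (ham : a ≤ m) :
    (Real.sqrt (a / ((a + c) * c)) * g) ^ 2 ≤ min m g := by
  have hL : (0:ℝ) < (a + c) * c := by positivity
  rw [mul_pow, Real.sq_sqrt (by positivity), div_mul_eq_mul_div, div_le_iff₀ hL]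
  rcases le_total m g with h | h
  · rw [min_eq_left h]
    nlinarith [mul_nonneg (mul_nonneg (sub_nonneg.2 ham) (by linarith : (0:ℝ) ≤ a + c)) hc.le,
      mul_nonneg (mul_nonneg ha.le (sub_nonneg.2 hgc)) (by linarith : (0:ℝ) ≤ c + g),
      mul_nonneg (mul_nonneg ha.le ha.le) hc.le]
  · rw [min_eq_right h]
    nlinarith [mul_nonneg (mul_nonneg ha.le hg) (sub_nonneg.2 hgc),
      mul_nonneg (mul_nonneg hg hc.le) hc.le]

/-- if the change-point is too close to one of the end-points of `[s, e]`
(relative to its jump magnitude), then the maximal absolute CUSUM of the observed data is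
at most `(√C₃ + 2√2)·√(log T)`, where `C₃ = 2(2√2 + 4)²`. -/
theorem statement8 (T s r e : ℕ) (hT : 2 ≤ T) (hs : 1 ≤ s) (hsr : s ≤ r) (hre : r < e)
    (heT : e ≤ T) (f : ℕ → ℝ) (μ₁ μ₂ Δ : ℝ) (hμ : μ₁ ≠ μ₂)
    (hf₁ : ∀ t, s ≤ t → t ≤ r → f t = μ₁) (hf₂ : ∀ t, r + 1 ≤ t → t ≤ e → f t = μ₂)
    (hΔ : Δ = |μ₂ - μ₁|) (C₃ : ℝ) (hC₃ : C₃ = 2 * (2 * Real.sqrt 2 + 4) ^ 2)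
    (hmin : min ((r : ℝ) - s + 1) ((e : ℝ) - r) * Δ ^ 2 ≤ C₃ * Real.log T)
    (X : ℕ → ℝ)
    (hX : ∀ b, s ≤ b → b < e →
      |cusum X s b e - cusum f s b e| ≤ Real.sqrt (8 * Real.log T)) :
    ∀ b, s ≤ b → b < e →
      |cusum X s b e| ≤ (Real.sqrt C₃ + 2 * Real.sqrt 2) * Real.sqrt (Real.log T) := by
  intro b hsb hbe
  have hlog : (0:ℝ) ≤ Real.log T := Real.log_nonneg (by exact_mod_cast le_trans (by norm_num) hT)
  have hC₃0 : (0:ℝ) ≤ C₃ := by rw [hC₃]; positivity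
  have hΔ' : Δ ^ 2 = (μ₁ - μ₂) ^ 2 := by rw [hΔ, sq_abs]; ring
  -- key: bound on |cusum f s b e|
  have hfbound : |cusum f s b e| ≤ Real.sqrt (C₃ * Real.log T) := by
    have ha : (0:ℝ) < (b:ℝ) - s + 1 := by
      have : (s:ℝ) ≤ b := by exact_mod_cast hsb
      linarith
    have hc : (0:ℝ) < (e:ℝ) - b := by
      have : (b:ℝ) < e := by exact_mod_cast hbe
      linarith
    have hL : (0:ℝ) < (e:ℝ) - s + 1 := by
      have : (s:ℝ) ≤ e := by exact_mod_cast le_trans hsb hbe.le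
      linarith
    have hsq : (cusum f s b e) ^ 2 ≤ min ((r : ℝ) - s + 1) ((e : ℝ) - r) * Δ ^ 2 := by
      rcases le_or_gt b r with hbr | hrb
      · -- b ≤ r
        have hS1 : ∑ t ∈ Finset.Icc s b, f t = ((b:ℝ) - s + 1) * μ₁ := by
          rw [const_sum_Icc f μ₁ s b (fun t h1 h2 => hf₁ t h1 (le_trans h2 hbr))]
          congr 1
          push_cast [Nat.cast_sub (by omega : s ≤ b + 1)]
          ring
        have hS2 : ∑ t ∈ Finset.Icc (b + 1) e, f t
            = ((r:ℝ) - b) * μ₁ + ((e:ℝ) - r) * μ₂ := by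
          rw [show Finset.Icc (b + 1) e = Finset.Ioc b e from Finset.Icc_add_one_left_eq_Ioc b e,
            ← Finset.sum_Ioc_consecutive _ hbr hre.le,
            const_sum_Ioc f μ₁ b r (fun t h1 h2 => hf₁ t (by omega) h2),
            const_sum_Ioc f μ₂ r e (fun t h1 h2 => hf₂ t (by omega) h2)]
          push_cast [Nat.cast_sub hbr, Nat.cast_sub hre.le]
          ring
        have hswap := sqrt_swap ((b:ℝ) - s + 1) ((e:ℝ) - b) ((e:ℝ) - s + 1) ha hc hL
        have hval : cusum f s b e
            = Real.sqrt (((b:ℝ) - s + 1) / (((e:ℝ) - s + 1) * ((e:ℝ) - b)))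
              * ((e:ℝ) - r) * (μ₁ - μ₂) := by
          unfold cusum
          rw [hS1, hS2]
          rw [show ((e:ℝ) - s + 1) * ((b:ℝ) - s + 1) = ((e:ℝ) - s + 1) * ((b:ℝ) - s + 1)
            from rfl]
          linear_combination μ₁ * hswap
        have hkey := sq_bound ((b:ℝ) - s + 1) ((e:ℝ) - b) ((e:ℝ) - r) ((r:ℝ) - s + 1)
          ha hc (by
            have : (r:ℝ) ≤ e := by exact_mod_cast hre.le
            linarith)
          (by
            have : (b:ℝ) ≤ r := by exact_mod_cast hbr
            linarith)
          (by
            have : (b:ℝ) ≤ r := by exact_mod_cast hbr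
            linarith)
        rw [show ((b:ℝ) - s + 1) + ((e:ℝ) - b) = (e:ℝ) - s + 1 from by ring] at hkey
        calc (cusum f s b e) ^ 2
            = (Real.sqrt (((b:ℝ) - s + 1) / (((e:ℝ) - s + 1) * ((e:ℝ) - b)))
                * ((e:ℝ) - r)) ^ 2 * Δ ^ 2 := by rw [hval, hΔ']; ring
          _ ≤ min ((r : ℝ) - s + 1) ((e : ℝ) - r) * Δ ^ 2 :=
              mul_le_mul_of_nonneg_right hkey (sq_nonneg Δ)
      · -- r < b
        have hS1 : ∑ t ∈ Finset.Icc s b, f t = ((r:ℝ) - s + 1) * μ₁ + ((b:ℝ) - r) * μ₂ := by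
          have hsplit : Finset.Icc s b = Finset.Icc s r ∪ Finset.Ioc r b := by
            ext t
            simp only [Finset.mem_Icc, Finset.mem_union, Finset.mem_Ioc]
            omega
          have hdisj : Disjoint (Finset.Icc s r) (Finset.Ioc r b) := by
            rw [Finset.disjoint_left]
            intro t ht ht'
            simp only [Finset.mem_Icc] at ht
            simp only [Finset.mem_Ioc] at ht'
            omega
          rw [hsplit, Finset.sum_union hdisj,
            const_sum_Icc f μ₁ s r (fun t h1 h2 => hf₁ t h1 h2),
            const_sum_Ioc f μ₂ r b (fun t h1 h2 => hf₂ t (by omega) (by omega))]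
          push_cast [Nat.cast_sub (by omega : s ≤ r + 1), Nat.cast_sub (le_of_lt hrb)]
          ring
        have hS2 : ∑ t ∈ Finset.Icc (b + 1) e, f t = ((e:ℝ) - b) * μ₂ := by
          rw [show Finset.Icc (b + 1) e = Finset.Ioc b e from Finset.Icc_add_one_left_eq_Ioc b e,
            const_sum_Ioc f μ₂ b e (fun t h1 h2 => hf₂ t (by omega) h2)]
          push_cast [Nat.cast_sub hbe.le]
          ring
        have hswap := sqrt_swap ((e:ℝ) - b) ((b:ℝ) - s + 1) ((e:ℝ) - s + 1) hc ha hL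
        have hval : cusum f s b e
            = Real.sqrt (((e:ℝ) - b) / (((e:ℝ) - s + 1) * ((b:ℝ) - s + 1)))
              * ((r:ℝ) - s + 1) * (μ₁ - μ₂) := by
          unfold cusum
          rw [hS1, hS2]
          linear_combination (-μ₂) * hswap
        have hkey := sq_bound ((e:ℝ) - b) ((b:ℝ) - s + 1) ((r:ℝ) - s + 1) ((e:ℝ) - r)
          hc ha (by
            have : (s:ℝ) ≤ r := by exact_mod_cast hsr
            linarith)
          (by
            have : (r:ℝ) ≤ b := by exact_mod_cast hrb.le
            linarith)
          (by
            have : (r:ℝ) ≤ b := by exact_mod_cast hrb.le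
            linarith)
        rw [show (((e:ℝ) - b) + ((b:ℝ) - s + 1)) * ((b:ℝ) - s + 1)
            = ((e:ℝ) - s + 1) * ((b:ℝ) - s + 1) from by ring, min_comm] at hkey
        calc (cusum f s b e) ^ 2
            = (Real.sqrt (((e:ℝ) - b) / (((e:ℝ) - s + 1) * ((b:ℝ) - s + 1)))
                * ((r:ℝ) - s + 1)) ^ 2 * Δ ^ 2 := by rw [hval, hΔ']; ring
          _ ≤ min ((r : ℝ) - s + 1) ((e : ℝ) - r) * Δ ^ 2 :=
              mul_le_mul_of_nonneg_right hkey (sq_nonneg Δ)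
    have hle : (cusum f s b e) ^ 2 ≤ C₃ * Real.log T := le_trans hsq hmin
    calc |cusum f s b e| = Real.sqrt ((cusum f s b e) ^ 2) := (Real.sqrt_sq_eq_abs _).symm
      _ ≤ Real.sqrt (C₃ * Real.log T) := Real.sqrt_le_sqrt hle
  -- conclude
  have h8 : Real.sqrt (8 * Real.log T) = 2 * Real.sqrt 2 * Real.sqrt (Real.log T) := by
    rw [show (8:ℝ) = 2 ^ 2 * 2 by norm_num, Real.sqrt_mul (by positivity),
      Real.sqrt_mul (by positivity), Real.sqrt_sq (by norm_num)]
  have hC : Real.sqrt (C₃ * Real.log T) = Real.sqrt C₃ * Real.sqrt (Real.log T) :=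
    Real.sqrt_mul hC₃0 _
  calc |cusum X s b e| = |cusum f s b e + (cusum X s b e - cusum f s b e)| := by
        rw [show cusum f s b e + (cusum X s b e - cusum f s b e) = cusum X s b e from by ring]
    _ ≤ |cusum f s b e| + |cusum X s b e - cusum f s b e| := abs_add_le _ _
    _ ≤ Real.sqrt (C₃ * Real.log T) + Real.sqrt (8 * Real.log T) :=
        add_le_add hfbound (hX b hsb hbe)
    _ = (Real.sqrt C₃ + 2 * Real.sqrt 2) * Real.sqrt (Real.log T) := by
        rw [h8, hC]; ring
end

section
/- Let T ≥ 2 be an integer, let 1 ≤ s < r < e ≤ T be integers, and let f ∈ ℝ^T be continuous piecewise-linear on [s,e] with exactly one change-point (kink) at r, with kink magnitude Δ. Let C₃ = 63^{1/3}·(2√2 + 4)^{2/3} and C₁ = √(2/3)·C₃^{3/2} + √8, and suppose min{r − s, e − r} + 1 ≤ 2^{1/3}·C₃·(log T)^{1/3}/Δ^{2/3}. If X ∈ ℝ^T satisfies |⟨X − f, ϕ^b_{s,e}⟩| ≤ √(8·log T) for every integer b with s < b < e, then max over integers b with s < b < e of C^b_{s,e}(X) ≤ C₁·√(log T). -/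
/-!
The contrast vector `ϕ^b_{s,e}` is a unit vector orthogonal to every linear trend on `[s, e]`
(both facts are closed-form power-sum identities). So `⟨f, ϕ⟩` does not change when `f` is
replaced by `f` minus the linear extension of its longer piece; what remains lives on the
shorter piece, where it equals `±Δ (t - r)`, with squared norm at most `Δ² (m + 1)³ / 3` for
`m = min (r - s) (e - r)`. Cauchy–Schwarz bounds `|⟨f, ϕ⟩|` by `Δ √((m + 1)³ / 3)`, which the
assumption on `m` turns into `√(2/3) C₃^{3/2} √(log T)`; the noise contributes `√(8 log T)`.
-/

open Real Finset

/-- Normalizing constant `α^b_{s,e}` of the linear contrast vector. -/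
noncomputable def alphaC (s b e : ℕ) : ℝ :=
  Real.sqrt (6 / (((e : ℝ) - s + 1) * (((e : ℝ) - s + 1) ^ 2 - 1) *
    (1 + ((e : ℝ) - b + 1) * ((b : ℝ) - s + 1) + ((e : ℝ) - b) * ((b : ℝ) - s))))

/-- Normalizing constant `β^b_{s,e}` of the linear contrast vector. -/
noncomputable def betaC (s b e : ℕ) : ℝ :=
  Real.sqrt ((((e : ℝ) - b + 1) * ((e : ℝ) - b)) / (((b : ℝ) - s + 1) * ((b : ℝ) - s)))

/-- The linear contrast vector `ϕ^b_{s,e}`, given coordinatewise as a function of `t`. -/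
noncomputable def phiC (s b e t : ℕ) : ℝ :=
  if s ≤ t ∧ t ≤ b then
    alphaC s b e * betaC s b e *
      (((e : ℝ) + 2 * b - 3 * s + 2) * t - ((b : ℝ) * e + (b : ℝ) * s - 2 * (s : ℝ) ^ 2 + 2 * s))
  else if b + 1 ≤ t ∧ t ≤ e then
    -(alphaC s b e / betaC s b e) *
      ((3 * (e : ℝ) - 2 * b - s + 2) * t - (2 * (e : ℝ) ^ 2 + 2 * e - (b : ℝ) * e - (b : ℝ) * s))
  else 0

/-- The contrast value `C^b_{s,e}(x) = |⟨x, ϕ^b_{s,e}⟩|`. -/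
noncomputable def contrastC (T s b e : ℕ) (x : ℕ → ℝ) : ℝ := |innerT T x (phiC s b e)|

section Sums

lemma sum_range_natCast (n : ℕ) : ∑ i ∈ range n, (i : ℝ) = n * (n - 1) / 2 := by
  induction n with
  | zero => simp
  | succ n ih => rw [sum_range_succ, ih]; push_cast; ring

lemma sum_range_natCast_sq (n : ℕ) :
    ∑ i ∈ range n, (i : ℝ) ^ 2 = n * (n - 1) * (2 * n - 1) / 6 := by
  induction n with
  | zero => simp
  | succ n ih => rw [sum_range_succ, ih]; push_cast; ring

variable {u v : ℕ}

lemma sum_Icc_natCast (h : u ≤ v + 1) :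
    ∑ t ∈ Icc u v, (t : ℝ) = ((v : ℝ) * (v + 1) - ((u : ℝ) - 1) * u) / 2 := by
  rw [← Ico_add_one_right_eq_Icc, sum_Ico_eq_sub _ h, sum_range_natCast, sum_range_natCast]
  push_cast; ring

lemma sum_Icc_natCast_sq (h : u ≤ v + 1) :
    ∑ t ∈ Icc u v, (t : ℝ) ^ 2 =
      ((v : ℝ) * (v + 1) * (2 * v + 1) - ((u : ℝ) - 1) * u * (2 * u - 1)) / 6 := by
  rw [← Ico_add_one_right_eq_Icc, sum_Ico_eq_sub _ h, sum_range_natCast_sq, sum_range_natCast_sq]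
  push_cast; ring

lemma sum_Icc_affine_mul_affine (h : u ≤ v + 1) (p q p' q' : ℝ) :
    ∑ t ∈ Icc u v, (p + q * t) * (p' + q' * t) =
      p * p' * ((v : ℝ) - u + 1)
        + (p * q' + q * p') * (((v : ℝ) * (v + 1) - ((u : ℝ) - 1) * u) / 2)
        + q * q' * (((v : ℝ) * (v + 1) * (2 * v + 1) - ((u : ℝ) - 1) * u * (2 * u - 1)) / 6) := by
  have hexp : ∀ t : ℕ, (p + q * t) * (p' + q' * t) =
      p * p' + (p * q' + q * p') * (t : ℝ) + q * q' * (t : ℝ) ^ 2 := fun t => by ring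
  simp only [hexp, sum_add_distrib, ← mul_sum, sum_const, Nat.card_Icc, nsmul_eq_mul,
    sum_Icc_natCast h, sum_Icc_natCast_sq h, Nat.cast_sub h]
  push_cast; ring

lemma sum_Icc_affine_sq (h : u ≤ v + 1) (p q : ℝ) :
    ∑ t ∈ Icc u v, (p + q * t) ^ 2 =
      p ^ 2 * ((v : ℝ) - u + 1) + 2 * p * q * (((v : ℝ) * (v + 1) - ((u : ℝ) - 1) * u) / 2)
        + q ^ 2 * (((v : ℝ) * (v + 1) * (2 * v + 1) - ((u : ℝ) - 1) * u * (2 * u - 1)) / 6) := by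
  simp only [sq, sum_Icc_affine_mul_affine h]
  ring

lemma sum_Icc_sub_endpoint_sq_le {r : ℕ} (huv : u ≤ v) (hr : r = u ∨ r = v) :
    ∑ t ∈ Icc u v, ((t : ℝ) - r) ^ 2 ≤ ((v : ℝ) - u + 1) ^ 3 / 3 := by
  have huv' : (u : ℝ) ≤ v := by exact_mod_cast huv
  have hsub : ∀ t : ℕ, (t : ℝ) - r = -r + 1 * t := fun t => by ring
  simp only [hsub, sum_Icc_affine_sq (by omega : u ≤ v + 1)]
  rcases hr with rfl | rfl
  · nlinarith [sq_nonneg ((v : ℝ) - r)]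
  · nlinarith [sq_nonneg ((r : ℝ) - u)]

end Sums

section Contrast

variable {T s b e : ℕ}

lemma phiC_of_le_of_le {t : ℕ} (hst : s ≤ t) (htb : t ≤ b) :
    phiC s b e t = alphaC s b e * betaC s b e *
      (-((b : ℝ) * e + b * s - 2 * s ^ 2 + 2 * s) + ((e : ℝ) + 2 * b - 3 * s + 2) * t) := by
  rw [phiC, if_pos ⟨hst, htb⟩]; ring

lemma phiC_of_lt_of_le {t : ℕ} (hbt : b < t) (hte : t ≤ e) :
    phiC s b e t = -(alphaC s b e / betaC s b e) *
      (-(2 * (e : ℝ) ^ 2 + 2 * e - b * e - b * s) + (3 * (e : ℝ) - 2 * b - s + 2) * t) := by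
  rw [phiC, if_neg (by omega), if_pos ⟨hbt, hte⟩]; ring

lemma phiC_of_notMem_Icc {t : ℕ} (hsb : s ≤ b) (hbe : b ≤ e) (ht : t ∉ Icc s e) :
    phiC s b e t = 0 := by
  rw [mem_Icc] at ht
  rw [phiC, if_neg (by omega), if_neg (by omega)]

lemma sum_Icc_one_phiC_eq (hs : 1 ≤ s) (hsb : s ≤ b) (hbe : b ≤ e) (heT : e ≤ T)
    (G : ℕ → ℝ → ℝ) (hG : ∀ t, G t 0 = 0) :
    ∑ t ∈ Icc 1 T, G t (phiC s b e t) =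
      ∑ t ∈ Icc s b, G t (alphaC s b e * betaC s b e *
        (-((b : ℝ) * e + b * s - 2 * s ^ 2 + 2 * s) + ((e : ℝ) + 2 * b - 3 * s + 2) * t)) +
      ∑ t ∈ Icc (b + 1) e, G t (-(alphaC s b e / betaC s b e) *
        (-(2 * (e : ℝ) ^ 2 + 2 * e - b * e - b * s) + (3 * (e : ℝ) - 2 * b - s + 2) * t)) := by
  rw [← sum_subset (Icc_subset_Icc hs heT) fun t _ ht => by rw [phiC_of_notMem_Icc hsb hbe ht, hG],
    ← Ico_add_one_right_eq_Icc, ← Ico_add_one_right_eq_Icc, ← Ico_add_one_right_eq_Icc,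
    ← sum_Ico_consecutive _ (by omega : s ≤ b + 1) (by omega)]
  congr 1 <;> refine sum_congr rfl fun t ht => ?_ <;> rw [mem_Ico] at ht
  · rw [phiC_of_le_of_le ht.1 (by omega)]
  · rw [phiC_of_lt_of_le (by omega) (by omega)]

lemma innerT_phiC_congr {x y : ℕ → ℝ} (hsb : s ≤ b) (hbe : b ≤ e)
    (h : ∀ t, s ≤ t → t ≤ e → x t = y t) :
    innerT T x (phiC s b e) = innerT T y (phiC s b e) := by
  refine sum_congr rfl fun t _ => ?_
  by_cases ht : t ∈ Icc s e
  · rw [mem_Icc] at ht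
    rw [h t ht.1 ht.2]
  · rw [phiC_of_notMem_Icc hsb hbe ht, mul_zero, mul_zero]

lemma betaC_sq (hsb : s < b) (hbe : b < e) :
    betaC s b e ^ 2 =
      (((e : ℝ) - b + 1) * ((e : ℝ) - b)) / (((b : ℝ) - s + 1) * ((b : ℝ) - s)) := by
  have hsb' : (s : ℝ) + 1 ≤ b := by exact_mod_cast hsb
  have hbe' : (b : ℝ) + 1 ≤ e := by exact_mod_cast hbe
  exact Real.sq_sqrt (div_nonneg (by nlinarith) (by nlinarith))

lemma betaC_pos (hsb : s < b) (hbe : b < e) : 0 < betaC s b e := by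
  have hsb' : (s : ℝ) + 1 ≤ b := by exact_mod_cast hsb
  have hbe' : (b : ℝ) + 1 ≤ e := by exact_mod_cast hbe
  exact Real.sqrt_pos.mpr (div_pos (by nlinarith) (by nlinarith))

lemma alphaC_sq (hsb : s < b) (hbe : b < e) :
    alphaC s b e ^ 2 = 6 / (((e : ℝ) - s + 1) * (((e : ℝ) - s + 1) ^ 2 - 1) *
      (1 + ((e : ℝ) - b + 1) * ((b : ℝ) - s + 1) + ((e : ℝ) - b) * ((b : ℝ) - s))) := by
  have hsb' : (s : ℝ) + 1 ≤ b := by exact_mod_cast hsb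
  have hbe' : (b : ℝ) + 1 ≤ e := by exact_mod_cast hbe
  refine Real.sq_sqrt (div_nonneg (by norm_num) (mul_nonneg (mul_nonneg ?_ ?_) ?_)) <;> nlinarith

theorem innerT_affine_phiC (hs : 1 ≤ s) (hsb : s < b) (hbe : b < e) (heT : e ≤ T) (c d : ℝ) :
    innerT T (fun t => c + d * t) (phiC s b e) = 0 := by
  have hsb' : (s : ℝ) + 1 ≤ b := by exact_mod_cast hsb
  have hbe' : (b : ℝ) + 1 ≤ e := by exact_mod_cast hbe
  have hβ := (betaC_pos hsb hbe).ne'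
  have hD : ((b : ℝ) - s + 1) * ((b : ℝ) - s) ≠ 0 := mul_ne_zero (by linarith) (by linarith)
  have key : betaC s b e ^ 2 * ∑ t ∈ Icc s b, (c + d * t) *
        (-((b : ℝ) * e + b * s - 2 * s ^ 2 + 2 * s) + ((e : ℝ) + 2 * b - 3 * s + 2) * t) =
      ∑ t ∈ Icc (b + 1) e, (c + d * t) *
        (-(2 * (e : ℝ) ^ 2 + 2 * e - b * e - b * s) + (3 * (e : ℝ) - 2 * b - s + 2) * t) := by
    rw [betaC_sq hsb hbe, sum_Icc_affine_mul_affine (by omega),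
      sum_Icc_affine_mul_affine (by omega), div_mul_eq_mul_div, div_eq_iff hD]
    push_cast
    ring
  rw [innerT, sum_Icc_one_phiC_eq hs hsb.le hbe.le heT (fun t y => (c + d * t) * y) (by simp)]
  simp only [mul_left_comm (c + d * _ : ℝ), ← mul_sum]
  rw [← key, ← mul_assoc, show -(alphaC s b e / betaC s b e) * betaC s b e ^ 2 =
    -(alphaC s b e * betaC s b e) by field_simp]
  ring

theorem sum_phiC_sq (hs : 1 ≤ s) (hsb : s < b) (hbe : b < e) (heT : e ≤ T) :
    ∑ t ∈ Icc 1 T, phiC s b e t ^ 2 = 1 := by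
  have hsb' : (s : ℝ) + 1 ≤ b := by exact_mod_cast hsb
  have hbe' : (b : ℝ) + 1 ≤ e := by exact_mod_cast hbe
  rw [sum_Icc_one_phiC_eq hs hsb.le hbe.le heT (fun _ y => y ^ 2) (by simp)]
  simp only [mul_pow, neg_sq, div_pow, ← mul_sum]
  rw [alphaC_sq hsb hbe, betaC_sq hsb hbe, sum_Icc_affine_sq (by omega),
    sum_Icc_affine_sq (by omega)]
  set D := ((b : ℝ) - s + 1) * ((b : ℝ) - s) with hD
  set N := ((e : ℝ) - b + 1) * ((e : ℝ) - b) with hN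
  set Dα := ((e : ℝ) - s + 1) * (((e : ℝ) - s + 1) ^ 2 - 1) *
      (1 + ((e : ℝ) - b + 1) * ((b : ℝ) - s + 1) + ((e : ℝ) - b) * ((b : ℝ) - s)) with hDα
  have hD0 : D ≠ 0 := mul_ne_zero (by linarith) (by linarith)
  have hN0 : N ≠ 0 := mul_ne_zero (by linarith) (by linarith)
  have hDα0 : Dα ≠ 0 := by refine mul_ne_zero (mul_ne_zero ?_ ?_) ?_ <;> nlinarith
  -- with the denominators abstracted, `field_simp` clears them without expanding them
  clear_value D N Dα
  field_simp
  subst D N Dα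
  push_cast
  ring

lemma innerT_sub_left (x y z : ℕ → ℝ) :
    innerT T (fun t => x t - y t) z = innerT T x z - innerT T y z := by
  simp only [innerT, sub_mul, sum_sub_distrib]

lemma abs_sum_mul_phiC_le (hs : 1 ≤ s) (hsb : s < b) (hbe : b < e) (heT : e ≤ T)
    {F : Finset ℕ} (hF : F ⊆ Icc 1 T) (g : ℕ → ℝ) :
    |∑ t ∈ F, g t * phiC s b e t| ≤ √(∑ t ∈ F, g t ^ 2) := by
  have hφ : ∑ t ∈ F, phiC s b e t ^ 2 ≤ 1 :=
    sum_phiC_sq hs hsb hbe heT ▸ sum_le_sum_of_subset_of_nonneg hF fun _ _ _ => sq_nonneg _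
  refine Real.abs_le_sqrt ((sum_mul_sq_le_sq_mul_sq F g _).trans ?_)
  exact mul_le_of_le_one_right (sum_nonneg fun _ _ => sq_nonneg _) hφ

theorem abs_innerT_phiC_le_of_eq_affine_add {u v r : ℕ} (hs : 1 ≤ s) (hsb : s < b) (hbe : b < e)
    (heT : e ≤ T) (hsu : s ≤ u) (huv : u ≤ v) (hve : v ≤ e) (hr : r = u ∨ r = v)
    {f : ℕ → ℝ} {c d κ : ℝ}
    (hf : ∀ t, s ≤ t → t ≤ e → f t = c + d * t + if t ∈ Icc u v then κ * ((t : ℝ) - r) else 0) :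
    |innerT T f (phiC s b e)| ≤ |κ| * √(((v : ℝ) - u + 1) ^ 3 / 3) := by
  have hsub : Icc u v ⊆ Icc 1 T := Icc_subset_Icc (by omega) (by omega)
  have hlocal : innerT T f (phiC s b e) = ∑ t ∈ Icc u v, κ * ((t : ℝ) - r) * phiC s b e t := by
    have hsplit : innerT T (fun t => c + d * t + if t ∈ Icc u v then κ * ((t : ℝ) - r) else 0)
          (phiC s b e) = innerT T (fun t => c + d * t) (phiC s b e) +
            ∑ t ∈ Icc 1 T, (if t ∈ Icc u v then κ * ((t : ℝ) - r) else 0) * phiC s b e t := by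
      simp only [innerT, add_mul, sum_add_distrib]
    rw [innerT_phiC_congr hsb.le hbe.le hf, hsplit, innerT_affine_phiC hs hsb hbe heT, zero_add]
    simp only [ite_mul, zero_mul, sum_ite_mem, inter_eq_right.2 hsub]
  calc |innerT T f (phiC s b e)|
      ≤ √(∑ t ∈ Icc u v, (κ * ((t : ℝ) - r)) ^ 2) :=
        hlocal ▸ abs_sum_mul_phiC_le hs hsb hbe heT hsub _
    _ = |κ| * √(∑ t ∈ Icc u v, ((t : ℝ) - r) ^ 2) := by
      simp only [mul_pow, ← mul_sum]
      rw [Real.sqrt_mul (sq_nonneg _), Real.sqrt_sq_eq_abs]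
    _ ≤ |κ| * √(((v : ℝ) - u + 1) ^ 3 / 3) := by
      gcongr
      exact sum_Icc_sub_endpoint_sq_le huv hr

end Contrast

theorem abs_innerT_phiC_le_of_kink {T s b e r : ℕ} (hs : 1 ≤ s) (hsb : s < b) (hbe : b < e)
    (heT : e ≤ T) (hsr : s < r) (hre : r < e) {f : ℕ → ℝ} {a₁ b₁ a₂ b₂ : ℝ}
    (hcont : a₁ + b₁ * r = a₂ + b₂ * r)
    (hf₁ : ∀ t, s ≤ t → t ≤ r → f t = a₁ + b₁ * t)
    (hf₂ : ∀ t, r ≤ t → t ≤ e → f t = a₂ + b₂ * t) :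
    |innerT T f (phiC s b e)| ≤ |b₁ - b₂| * √((min ((r : ℝ) - s) ((e : ℝ) - r) + 1) ^ 3 / 3) := by
  rcases le_total ((r : ℝ) - s) ((e : ℝ) - r) with h | h
  · rw [min_eq_left h]
    refine abs_innerT_phiC_le_of_eq_affine_add hs hsb hbe heT le_rfl hsr.le hre.le (Or.inr rfl)
      (c := a₂) (d := b₂) fun t hst hte => ?_
    by_cases htr : t ≤ r
    · rw [hf₁ t hst htr, if_pos (mem_Icc.2 ⟨hst, htr⟩)]
      linear_combination hcont
    · rw [hf₂ t (by omega) hte, if_neg (by rw [mem_Icc]; omega)]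
      ring
  · rw [min_eq_right h, abs_sub_comm]
    refine abs_innerT_phiC_le_of_eq_affine_add hs hsb hbe heT hsr.le hre.le le_rfl (Or.inl rfl)
      (c := a₁) (d := b₁) fun t hst hte => ?_
    by_cases hrt : r ≤ t
    · rw [hf₂ t hrt hte, if_pos (mem_Icc.2 ⟨hrt, hte⟩)]
      linear_combination -hcont
    · rw [hf₁ t hst (by omega), if_neg (by rw [mem_Icc]; omega)]
      ring

lemma mul_sqrt_cube_div_three_le {L Δ m C : ℝ} (hL : 0 ≤ L) (hΔ : 0 < Δ) (hm : 0 < m)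
    (h : m ≤ 2 ^ ((1 : ℝ) / 3) * C * L ^ ((1 : ℝ) / 3) / Δ ^ ((2 : ℝ) / 3)) :
    Δ * √(m ^ 3 / 3) ≤ √(2 / 3) * C ^ ((3 : ℝ) / 2) * √L := by
  have h' : m * Δ ^ ((2 : ℝ) / 3) ≤ 2 ^ ((1 : ℝ) / 3) * C * L ^ ((1 : ℝ) / 3) :=
    (le_div_iff₀ (by positivity)).1 h
  have hC : 0 ≤ C := by
    by_contra! hC
    have : 2 ^ ((1 : ℝ) / 3) * C * L ^ ((1 : ℝ) / 3) ≤ 0 :=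
      mul_nonpos_of_nonpos_of_nonneg (mul_nonpos_of_nonneg_of_nonpos (by positivity) hC.le)
        (by positivity)
    have : 0 < m * Δ ^ ((2 : ℝ) / 3) := by positivity
    linarith
  have hcube : m ^ 3 * Δ ^ 2 ≤ 2 * C ^ 3 * L := by
    have := pow_le_pow_left₀ (by positivity) h' 3
    rw [mul_pow, mul_pow, mul_pow, ← Real.rpow_natCast (Δ ^ _), ← Real.rpow_natCast (2 ^ _),
      ← Real.rpow_natCast (L ^ _), ← Real.rpow_mul hΔ.le, ← Real.rpow_mul zero_le_two,
      ← Real.rpow_mul hL] at this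
    norm_num at this
    exact this
  calc Δ * √(m ^ 3 / 3) = √(m ^ 3 * Δ ^ 2 / 3) := by
        rw [mul_div_right_comm, Real.sqrt_mul' _ (sq_nonneg Δ), Real.sqrt_sq hΔ.le, mul_comm]
    _ ≤ √(2 / 3 * C ^ 3 * L) := by gcongr; linarith
    _ = √(2 / 3) * C ^ ((3 : ℝ) / 2) * √L := by
      rw [Real.sqrt_mul (by positivity), Real.sqrt_mul (by norm_num), Real.sqrt_eq_rpow,
        Real.sqrt_eq_rpow, ← Real.rpow_natCast, ← Real.rpow_mul hC]
      norm_num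

theorem statement15_general (T s r e : ℕ) (hs : 1 ≤ s) (hsr : s < r) (hre : r < e)
    (heT : e ≤ T) (f : ℕ → ℝ) (a₁ b₁ a₂ b₂ Δ : ℝ) (hslope : b₁ ≠ b₂)
    (hcont : a₁ + b₁ * r = a₂ + b₂ * r)
    (hf₁ : ∀ t, s ≤ t → t ≤ r → f t = a₁ + b₁ * t)
    (hf₂ : ∀ t, r ≤ t → t ≤ e → f t = a₂ + b₂ * t)
    (hΔ : Δ = |b₁ - b₂|)
    (C₃ C₁ : ℝ)
    (hC₁ : C₁ = Real.sqrt (2 / 3) * C₃ ^ ((3 : ℝ) / 2) + Real.sqrt 8)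
    (hmin : min ((r : ℝ) - s) ((e : ℝ) - r) + 1 ≤
      (2 : ℝ) ^ ((1 : ℝ) / 3) * C₃ * (Real.log T) ^ ((1 : ℝ) / 3) / Δ ^ ((2 : ℝ) / 3))
    (X : ℕ → ℝ)
    (hX : ∀ b, s < b → b < e →
      |innerT T (fun t => X t - f t) (phiC s b e)| ≤ Real.sqrt (8 * Real.log T)) :
    ∀ b, s < b → b < e → contrastC T s b e X ≤ C₁ * Real.sqrt (Real.log T) := by
  intro b hsb hbe
  have hlog : 0 ≤ Real.log T := Real.log_nonneg (by exact_mod_cast (by omega : 1 ≤ T))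
  have hΔpos : 0 < Δ := hΔ ▸ abs_pos.2 (sub_ne_zero.2 hslope)
  have hm : 0 < min ((r : ℝ) - s) ((e : ℝ) - r) + 1 := by
    have : (0 : ℝ) ≤ min ((r : ℝ) - s) ((e : ℝ) - r) :=
      le_min (by simp [hsr.le]) (by simp [hre.le])
    linarith
  have hsignal : |innerT T f (phiC s b e)| ≤ Δ * √((min ((r : ℝ) - s) ((e : ℝ) - r) + 1) ^ 3 / 3) :=
    hΔ ▸ abs_innerT_phiC_le_of_kink hs hsb hbe heT hsr hre hcont hf₁ hf₂
  calc contrastC T s b e X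
      ≤ |innerT T (fun t => X t - f t) (phiC s b e)| + |innerT T f (phiC s b e)| := by
        rw [contrastC, innerT_sub_left]
        linarith [abs_sub_abs_le_abs_sub (innerT T X (phiC s b e)) (innerT T f (phiC s b e))]
    _ ≤ √(8 * Real.log T) + Δ * √((min ((r : ℝ) - s) ((e : ℝ) - r) + 1) ^ 3 / 3) :=
        add_le_add (hX b hsb hbe) hsignal
    _ ≤ √8 * √(Real.log T) + √(2 / 3) * C₃ ^ ((3 : ℝ) / 2) * √(Real.log T) := by
        rw [Real.sqrt_mul (by norm_num)]
        exact add_le_add_right (mul_sqrt_cube_div_three_le hlog hΔpos hm hmin) _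
    _ = C₁ * √(Real.log T) := by rw [hC₁]; ring

/-- if the kink is too close to one of the end-points of `[s, e]` (relative
to its magnitude), then the maximal contrast value of the observed data is at most
`C₁ √(log T)`, where `C₃ = 63^{1/3}(2√2 + 4)^{2/3}` and `C₁ = √(2/3)·C₃^{3/2} + √8`. -/
theorem statement15 (T s r e : ℕ) (hT : 2 ≤ T) (hs : 1 ≤ s) (hsr : s < r) (hre : r < e)
    (heT : e ≤ T) (f : ℕ → ℝ) (a₁ b₁ a₂ b₂ Δ : ℝ) (hslope : b₁ ≠ b₂)
    (hcont : a₁ + b₁ * r = a₂ + b₂ * r)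
    (hf₁ : ∀ t, s ≤ t → t ≤ r → f t = a₁ + b₁ * t)
    (hf₂ : ∀ t, r ≤ t → t ≤ e → f t = a₂ + b₂ * t)
    (hΔ : Δ = |b₁ - b₂|)
    (C₃ C₁ : ℝ) (hC₃ : C₃ = (63 : ℝ) ^ ((1 : ℝ) / 3) * (2 * Real.sqrt 2 + 4) ^ ((2 : ℝ) / 3))
    (hC₁ : C₁ = Real.sqrt (2 / 3) * C₃ ^ ((3 : ℝ) / 2) + Real.sqrt 8)
    (hmin : min ((r : ℝ) - s) ((e : ℝ) - r) + 1 ≤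
      (2 : ℝ) ^ ((1 : ℝ) / 3) * C₃ * (Real.log T) ^ ((1 : ℝ) / 3) / Δ ^ ((2 : ℝ) / 3))
    (X : ℕ → ℝ)
    (hX : ∀ b, s < b → b < e →
      |innerT T (fun t => X t - f t) (phiC s b e)| ≤ Real.sqrt (8 * Real.log T)) :
    ∀ b, s < b → b < e → contrastC T s b e X ≤ C₁ * Real.sqrt (Real.log T) :=
  statement15_general T s r e hs hsr hre heT f a₁ b₁ a₂ b₂ Δ hslope hcont hf₁ hf₂ hΔ C₃ C₁ hC₁ hmin
    X hX
end
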